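/- arXiv:2503.08996 — 2 statements merged into one kernel-verified Lean document; each statement's English description precedes it below -/
import Mathlib

section
/- Let φ̃(k₁,k₂) = √(3 + 2cos k₁ + 2cos k₂ + 2cos(k₁−k₂)) and suppose φ̃(k₁,k₂) ≠ 0. Then the determinant of the Hessian matrix of φ̃ at (k₁,k₂) satisfies (∂²₁₁φ̃)(∂²₂₂φ̃) − (∂²₁₂φ̃)² = α̃₁α̃₂α̃₁₂(α̃₁+α̃₂+α̃₁₂)/φ̃⁶, where α̃₁ = 1+cos k₂+cos(k₁−k₂), α̃₂ = 1+cos k₁+cos(k₁−k₂), α̃₁₂ = 1+cos k₁+cos k₂. -/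
noncomputable def phiT (k₁ k₂ : ℝ) : ℝ :=
  Real.sqrt (3 + 2 * Real.cos k₁ + 2 * Real.cos k₂ + 2 * Real.cos (k₁ - k₂))

noncomputable def Fgr (a b : ℝ) : ℝ := 3 + 2 * Real.cos a + 2 * Real.cos b + 2 * Real.cos (a - b)

lemma hasDerivAt_Fgr1 (b a : ℝ) :
    HasDerivAt (fun x => Fgr x b) (-2 * Real.sin a - 2 * Real.sin (a - b)) a := by
  have h1 : HasDerivAt (fun x : ℝ => x - b) 1 a := (hasDerivAt_id a).sub_const b
  have h2 : HasDerivAt (fun x => Real.cos (x - b)) (-Real.sin (a - b) * 1) a :=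
    by have := (Real.hasDerivAt_cos (a - b)).comp a h1; exact this
  have h3 : HasDerivAt (fun x => Fgr x b)
      (0 + 2 * (-Real.sin a) + 0 + 2 * (-Real.sin (a - b) * 1)) a := by
    exact (((hasDerivAt_const a (3:ℝ)).add ((Real.hasDerivAt_cos a).const_mul 2)).add
      (hasDerivAt_const a (2 * Real.cos b))).add (h2.const_mul 2)
  convert h3 using 1; ring

lemma hasDerivAt_Fgr2 (a b : ℝ) :
    HasDerivAt (fun y => Fgr a y) (-2 * Real.sin b + 2 * Real.sin (a - b)) b := by
  have h1 : HasDerivAt (fun y : ℝ => a - y) (-1) b := by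
    simpa using (hasDerivAt_id b).const_sub a
  have h2 : HasDerivAt (fun y => Real.cos (a - y)) (-Real.sin (a - b) * (-1)) b :=
    (Real.hasDerivAt_cos (a - b)).comp b h1
  have h3 : HasDerivAt (fun y => Fgr a y)
      (0 + 0 + 2 * (-Real.sin b) + 2 * (-Real.sin (a - b) * (-1))) b := by
    exact (((hasDerivAt_const b (3:ℝ)).add (hasDerivAt_const b (2 * Real.cos a))).add
      ((Real.hasDerivAt_cos b).const_mul 2)).add (h2.const_mul 2)
  convert h3 using 1; ring

noncomputable def D1 (a b : ℝ) : ℝ :=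
  (-2 * Real.sin a - 2 * Real.sin (a - b)) / (2 * Real.sqrt (Fgr a b))

noncomputable def D2 (a b : ℝ) : ℝ :=
  (-2 * Real.sin b + 2 * Real.sin (a - b)) / (2 * Real.sqrt (Fgr a b))

lemma deriv1_eq (a b : ℝ) (hab : 0 < Fgr a b) : deriv (fun y => phiT y b) a = D1 a b := by
  have h := (hasDerivAt_Fgr1 b a).sqrt (by positivity)
  have heq : (fun y => phiT y b) = fun y => Real.sqrt (Fgr y b) := by
    funext y; simp [phiT, Fgr]
  rw [heq]
  exact h.deriv

lemma deriv2_eq (a b : ℝ) (hab : 0 < Fgr a b) : deriv (fun y => phiT a y) b = D2 a b := by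
  have h := (hasDerivAt_Fgr2 a b).sqrt (by positivity)
  have heq : (fun y => phiT a y) = fun y => Real.sqrt (Fgr a y) := by
    funext y; simp [phiT, Fgr]
  rw [heq]
  exact h.deriv

/-- numerator hasDerivAt for D1 in first variable -/
lemma hasDerivAt_N1 (b a : ℝ) :
    HasDerivAt (fun x => -2 * Real.sin x - 2 * Real.sin (x - b))
      (-2 * Real.cos a - 2 * Real.cos (a - b)) a := by
  have h1 : HasDerivAt (fun x : ℝ => x - b) 1 a := (hasDerivAt_id a).sub_const b
  have h2 : HasDerivAt (fun x => Real.sin (x - b)) (Real.cos (a - b) * 1) a :=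
    by have := (Real.hasDerivAt_sin (a - b)).comp a h1; exact this
  have h3 : HasDerivAt (fun x => -2 * Real.sin x - 2 * Real.sin (x - b))
      (-2 * Real.cos a - 2 * (Real.cos (a - b) * 1)) a :=
    ((Real.hasDerivAt_sin a).const_mul (-2)).sub (h2.const_mul 2)
  convert h3 using 1; ring

/-- numerator hasDerivAt for D2 in second variable -/
lemma hasDerivAt_N2 (a b : ℝ) :
    HasDerivAt (fun y => -2 * Real.sin y + 2 * Real.sin (a - y))
      (-2 * Real.cos b - 2 * Real.cos (a - b)) b := by
  have h1 : HasDerivAt (fun y : ℝ => a - y) (-1) b := by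
    simpa using (hasDerivAt_id b).const_sub a
  have h2 : HasDerivAt (fun y => Real.sin (a - y)) (Real.cos (a - b) * (-1)) b :=
    (Real.hasDerivAt_sin (a - b)).comp b h1
  have h3 : HasDerivAt (fun y => -2 * Real.sin y + 2 * Real.sin (a - y))
      (-2 * Real.cos b + 2 * (Real.cos (a - b) * (-1))) b :=
    ((Real.hasDerivAt_sin b).const_mul (-2)).add (h2.const_mul 2)
  convert h3 using 1; ring

/-- numerator hasDerivAt for D2 in first variable -/
lemma hasDerivAt_N3 (b a : ℝ) :
    HasDerivAt (fun x => -2 * Real.sin b + 2 * Real.sin (x - b))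
      (2 * Real.cos (a - b)) a := by
  have h1 : HasDerivAt (fun x : ℝ => x - b) 1 a := (hasDerivAt_id a).sub_const b
  have h2 : HasDerivAt (fun x => Real.sin (x - b)) (Real.cos (a - b) * 1) a :=
    by have := (Real.hasDerivAt_sin (a - b)).comp a h1; exact this
  have h3 : HasDerivAt (fun x => -2 * Real.sin b + 2 * Real.sin (x - b))
      (0 + 2 * (Real.cos (a - b) * 1)) a :=
    (hasDerivAt_const a (-2 * Real.sin b)).add (h2.const_mul 2)
  convert h3 using 1; ring

/-- generic quotient-rule cleanup -/
lemma div_aux (n' n m s F : ℝ) (hs : s ≠ 0) (h2 : s ^ 2 = F) :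
    (n' * (2 * s) - n * (2 * (m / (2 * s)))) / (2 * s) ^ 2
      = (2 * n' * F - n * m) / (4 * s ^ 3) := by
  rw [← h2]; field_simp; ring

lemma final_aux (a b c n s : ℝ) (hs : s ≠ 0) (h : a * b - c ^ 2 = 16 * n) :
    a / (4 * s ^ 3) * (b / (4 * s ^ 3)) - (c / (4 * s ^ 3)) ^ 2 = n / s ^ 6 := by
  field_simp
  linear_combination h

lemma key (c1 c2 s1 s2 : ℝ) (h1 : s1 ^ 2 + c1 ^ 2 = 1) (h2 : s2 ^ 2 + c2 ^ 2 = 1) :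
    (2 * (-2 * c1 - 2 * (c1 * c2 + s1 * s2)) * (3 + 2 * c1 + 2 * c2 + 2 * (c1 * c2 + s1 * s2))
        - (-2 * s1 - 2 * (s1 * c2 - c1 * s2)) ^ 2) *
      (2 * (-2 * c2 - 2 * (c1 * c2 + s1 * s2)) * (3 + 2 * c1 + 2 * c2 + 2 * (c1 * c2 + s1 * s2))
        - (-2 * s2 + 2 * (s1 * c2 - c1 * s2)) ^ 2) -
      (2 * (2 * (c1 * c2 + s1 * s2)) * (3 + 2 * c1 + 2 * c2 + 2 * (c1 * c2 + s1 * s2))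
        - (-2 * s2 + 2 * (s1 * c2 - c1 * s2)) * (-2 * s1 - 2 * (s1 * c2 - c1 * s2))) ^ 2
    = 16 * ((1 + c2 + (c1 * c2 + s1 * s2)) * (1 + c1 + (c1 * c2 + s1 * s2)) * (1 + c1 + c2) *
        ((1 + c2 + (c1 * c2 + s1 * s2)) + (1 + c1 + (c1 * c2 + s1 * s2)) + (1 + c1 + c2))) := by
  linear_combination
    ((16)*s2^2 + (32)*s2^4 + (48)*s1*s2 + (32)*s1*s2^3 + (32)*s1^2*s2^2 + (48)*c2 + (80)*c2*s2^2 + (64)*c2*s1*s2 + (32)*c2*s1*s2^3 + (128)*c2^2 + (64)*c2^2*s2^2 + (64)*c2^2*s1*s2 + (112)*c2^3 + (32)*c2^3*s1*s2 + (32)*c2^4 + (80)*c1*s2^2 + (32)*c1*s1*s2 + (32)*c1*s1*s2^3 + (80)*c1*c2 + (96)*c1*c2*s2^2 + (64)*c1*c2*s1*s2 + (176)*c1*c2^2 + (32)*c1*c2^2*s2^2 + (32)*c1*c2^2*s1*s2 + (128)*c1*c2^3 + (32)*c1*c2^4 + (32)*c1^2*s2^2 + (32)*c1^2*c2 + (32)*c1^2*c2*s2^2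 + (64)*c1^2*c2^2 + (32)*c1^2*c2^3) * h1 +
    ((48) + (32)*s2^2 + (80)*s1*s2 + (80)*c2 + (64)*c2*s1*s2 + (32)*c2^2 + (128)*c1 + (96)*c1*s1*s2 + (176)*c1*c2 + (64)*c1*c2*s1*s2 + (64)*c1*c2^2 + (112)*c1^2 + (-32)*c1^2*s2^2 + (32)*c1^2*s1*s2 + (128)*c1^2*c2 + (32)*c1^2*c2^2 + (32)*c1^3 + (32)*c1^3*c2) * h2

theorem stmt_5 (k₁ k₂ : ℝ) (h : phiT k₁ k₂ ≠ 0) :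
    (deriv (fun x => deriv (fun y => phiT y k₂) x) k₁) *
        (deriv (fun x => deriv (fun y => phiT k₁ y) x) k₂) -
      (deriv (fun x => deriv (fun y => phiT x y) k₂) k₁) ^ 2 =
      (1 + Real.cos k₂ + Real.cos (k₁ - k₂)) * (1 + Real.cos k₁ + Real.cos (k₁ - k₂)) *
        (1 + Real.cos k₁ + Real.cos k₂) *
        ((1 + Real.cos k₂ + Real.cos (k₁ - k₂)) + (1 + Real.cos k₁ + Real.cos (k₁ - k₂))
          + (1 + Real.cos k₁ + Real.cos k₂)) / (phiT k₁ k₂) ^ 6 := by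
  have hpos : 0 < Fgr k₁ k₂ := by
    rcases lt_or_ge 0 (Fgr k₁ k₂) with h' | h'
    · exact h'
    · exact absurd (Real.sqrt_eq_zero'.2
        (show (3:ℝ) + 2 * Real.cos k₁ + 2 * Real.cos k₂ + 2 * Real.cos (k₁ - k₂) ≤ 0 from h'))
        (by simpa [phiT, Fgr] using h)
  have hs : Real.sqrt (Fgr k₁ k₂) ≠ 0 := by positivity
  have hsq : (Real.sqrt (Fgr k₁ k₂)) ^ 2 = Fgr k₁ k₂ := Real.sq_sqrt hpos.le
  have hc1 : Continuous fun x => Fgr x k₂ := by unfold Fgr; fun_prop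
  have hc2 : Continuous fun y => Fgr k₁ y := by unfold Fgr; fun_prop
  have hev1 : ∀ᶠ x in nhds k₁, 0 < Fgr x k₂ :=
    hc1.continuousAt.eventually (eventually_gt_nhds hpos)
  have hev2 : ∀ᶠ y in nhds k₂, 0 < Fgr k₁ y :=
    hc2.continuousAt.eventually (eventually_gt_nhds hpos)
  have e11 : deriv (fun x => deriv (fun y => phiT y k₂) x) k₁ = deriv (fun x => D1 x k₂) k₁ :=
    Filter.EventuallyEq.deriv_eq (hev1.mono fun x hx => deriv1_eq x k₂ hx)
  have e22 : deriv (fun x => deriv (fun y => phiT k₁ y) x) k₂ = deriv (fun y => D2 k₁ y) k₂ :=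
    Filter.EventuallyEq.deriv_eq (hev2.mono fun y hy => deriv2_eq k₁ y hy)
  have e12 : deriv (fun x => deriv (fun y => phiT x y) k₂) k₁ = deriv (fun x => D2 x k₂) k₁ :=
    Filter.EventuallyEq.deriv_eq (hev1.mono fun x hx => deriv2_eq x k₂ hx)
  -- denominator hasDerivAt (in first variable)
  have hden1 : HasDerivAt (fun x => 2 * Real.sqrt (Fgr x k₂))
      (2 * ((-2 * Real.sin k₁ - 2 * Real.sin (k₁ - k₂)) / (2 * Real.sqrt (Fgr k₁ k₂)))) k₁ := by
    exact (((hasDerivAt_Fgr1 k₂ k₁).sqrt hpos.ne').const_mul 2)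
  have hden2 : HasDerivAt (fun y => 2 * Real.sqrt (Fgr k₁ y))
      (2 * ((-2 * Real.sin k₂ + 2 * Real.sin (k₁ - k₂)) / (2 * Real.sqrt (Fgr k₁ k₂)))) k₂ := by
    exact (((hasDerivAt_Fgr2 k₁ k₂).sqrt hpos.ne').const_mul 2)
  have hden1ne : 2 * Real.sqrt (Fgr k₁ k₂) ≠ 0 := by positivity
  have hd11 : deriv (fun x => D1 x k₂) k₁ =
      (2 * (-2 * Real.cos k₁ - 2 * Real.cos (k₁ - k₂)) * Fgr k₁ k₂
        - (-2 * Real.sin k₁ - 2 * Real.sin (k₁ - k₂)) * (-2 * Real.sin k₁ - 2 * Real.sin (k₁ - k₂)))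
        / (4 * Real.sqrt (Fgr k₁ k₂) ^ 3) := by
    have hq := ((hasDerivAt_N1 k₂ k₁).div hden1 hden1ne).deriv
    simp only [D1]
    refine hq.trans ?_
    exact div_aux _ _ _ _ _ hs hsq
  have hd22 : deriv (fun y => D2 k₁ y) k₂ =
      (2 * (-2 * Real.cos k₂ - 2 * Real.cos (k₁ - k₂)) * Fgr k₁ k₂
        - (-2 * Real.sin k₂ + 2 * Real.sin (k₁ - k₂)) * (-2 * Real.sin k₂ + 2 * Real.sin (k₁ - k₂)))
        / (4 * Real.sqrt (Fgr k₁ k₂) ^ 3) := by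
    have hq := ((hasDerivAt_N2 k₁ k₂).div hden2 hden1ne).deriv
    simp only [D2]
    refine hq.trans ?_
    exact div_aux _ _ _ _ _ hs hsq
  have hd12 : deriv (fun x => D2 x k₂) k₁ =
      (2 * (2 * Real.cos (k₁ - k₂)) * Fgr k₁ k₂
        - (-2 * Real.sin k₂ + 2 * Real.sin (k₁ - k₂)) * (-2 * Real.sin k₁ - 2 * Real.sin (k₁ - k₂)))
        / (4 * Real.sqrt (Fgr k₁ k₂) ^ 3) := by
    have hq := ((hasDerivAt_N3 k₂ k₁).div hden1 hden1ne).deriv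
    simp only [D2]
    refine hq.trans ?_
    exact div_aux _ _ _ _ _ hs hsq
  rw [e11, e22, e12, hd11, hd22, hd12,
    show phiT k₁ k₂ = Real.sqrt (Fgr k₁ k₂) from rfl]
  have hsq' : (-2 * Real.sin k₁ - 2 * Real.sin (k₁ - k₂)) *
      (-2 * Real.sin k₁ - 2 * Real.sin (k₁ - k₂)) =
      (-2 * Real.sin k₁ - 2 * Real.sin (k₁ - k₂)) ^ 2 := by ring
  refine final_aux _ _ _ _ _ hs ?_
  have hk := key (Real.cos k₁) (Real.cos k₂) (Real.sin k₁) (Real.sin k₂)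
    (Real.sin_sq_add_cos_sq k₁) (Real.sin_sq_add_cos_sq k₂)
  show _ = 16 * _
  rw [show Fgr k₁ k₂ = 3 + 2 * Real.cos k₁ + 2 * Real.cos k₂ + 2 * Real.cos (k₁ - k₂) from rfl,
    Real.cos_sub, Real.sin_sub]
  linear_combination hk
end

section
/- Let φ̃(k₁,k₂) = √(3 + 2cos k₁ + 2cos k₂ + 2cos(k₁−k₂)) with φ̃(k₁,k₂) ≠ 0. Then the Hessian determinant of φ̃ vanishes at (k₁,k₂) if and only if α̃₁(k₁,k₂) = 0 or α̃₂(k₁,k₂) = 0 or α̃₁₂(k₁,k₂) = 0, where α̃₁ = 1+cos k₂+cos(k₁−k₂), α̃₂ = 1+cos k₁+cos(k₁−k₂), α̃₁₂ = 1+cos k₁+cos k₂. -/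
open Real Filter Topology

theorem div_mul_div_sub_div_sq_eq_zero_iff {K : Type*} [Field K] {a b c d : K} (hd : d ≠ 0) :
    a / d * (b / d) - (c / d) ^ 2 = 0 ↔ a * b - c ^ 2 = 0 := by
  rw [div_mul_div_comm, div_pow, ← sq, ← sub_div, div_eq_zero_iff]
  simp [hd]

theorem HasDerivAt.div_two_sqrt {u v : ℝ → ℝ} {u' v' x : ℝ} (hu : HasDerivAt u u' x)
    (hv : HasDerivAt v v' x) (hx : 0 < u x) :
    HasDerivAt (fun t => v t / (2 * √(u t)))
      ((2 * u x * v' - u' * v x) / (4 * √(u x) ^ 3)) x := by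
  have hs : 0 < √(u x) := sqrt_pos.mpr hx
  refine (hv.div ((hu.sqrt hx.ne').const_mul 2) (by positivity)).congr_deriv ?_
  field_simp
  rw [sq_sqrt hx.le]
  ring

theorem cos_sq_add_cos_sq_add_cos_sub_sq (a b : ℝ) :
    cos a ^ 2 + cos b ^ 2 + cos (a - b) ^ 2 - 2 * cos a * cos b * cos (a - b) = 1 := by
  rw [cos_sub]
  linear_combination (1 - cos b ^ 2) * sin_sq_add_cos_sq a + sin a ^ 2 * sin_sq_add_cos_sq b

noncomputable def phiTSq (k₁ k₂ : ℝ) : ℝ :=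
  3 + 2 * cos k₁ + 2 * cos k₂ + 2 * cos (k₁ - k₂)

theorem continuous_phiTSq : Continuous fun k : ℝ × ℝ => phiTSq k.1 k.2 := by
  unfold phiTSq
  fun_prop

theorem hasDerivAt_phiTSq_fst (x y : ℝ) :
    HasDerivAt (fun t => phiTSq t y) (-2 * sin x - 2 * sin (x - y)) x := by
  have h := ((((hasDerivAt_cos x).const_mul 2).const_add 3).add_const (2 * cos y)).add
    (((hasDerivAt_cos (x - y)).comp_sub_const x y).const_mul 2)
  exact h.congr_deriv (by ring)

theorem hasDerivAt_phiTSq_snd (x y : ℝ) :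
    HasDerivAt (fun t => phiTSq x t) (-2 * sin y + 2 * sin (x - y)) y := by
  have h := (((hasDerivAt_cos y).const_mul 2).const_add (3 + 2 * cos x)).add
    (((hasDerivAt_cos (x - y)).comp_const_sub x y).const_mul 2)
  exact h.congr_deriv (by ring)

theorem hasDerivAt_phiT_fst {x y : ℝ} (h : 0 < phiTSq x y) :
    HasDerivAt (fun t => phiT t y) ((-2 * sin x - 2 * sin (x - y)) / (2 * √(phiTSq x y))) x :=
  (hasDerivAt_phiTSq_fst x y).sqrt h.ne'

theorem hasDerivAt_phiT_snd {x y : ℝ} (h : 0 < phiTSq x y) :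
    HasDerivAt (fun t => phiT x t) ((-2 * sin y + 2 * sin (x - y)) / (2 * √(phiTSq x y))) y :=
  (hasDerivAt_phiTSq_snd x y).sqrt h.ne'

theorem eventually_pos_phiTSq_fst {k₁ k₂ : ℝ} (h : 0 < phiTSq k₁ k₂) :
    ∀ᶠ x in 𝓝 k₁, 0 < phiTSq x k₂ :=
  (continuous_phiTSq.comp (Continuous.prodMk_left k₂)).continuousAt.eventually
    (eventually_gt_nhds h)

theorem eventually_pos_phiTSq_snd {k₁ k₂ : ℝ} (h : 0 < phiTSq k₁ k₂) :
    ∀ᶠ y in 𝓝 k₂, 0 < phiTSq k₁ y :=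
  (continuous_phiTSq.comp (Continuous.prodMk_right k₁)).continuousAt.eventually
    (eventually_gt_nhds h)

theorem deriv_deriv_phiT_fst_fst {k₁ k₂ : ℝ} (h : 0 < phiTSq k₁ k₂) :
    deriv (fun x => deriv (fun y => phiT y k₂) x) k₁ =
      (2 * phiTSq k₁ k₂ * (-2 * cos k₁ - 2 * cos (k₁ - k₂)) -
          (-2 * sin k₁ - 2 * sin (k₁ - k₂)) ^ 2) / (4 * √(phiTSq k₁ k₂) ^ 3) := by
  have hv : HasDerivAt (fun x => -2 * sin x - 2 * sin (x - k₂))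
      (-2 * cos k₁ - 2 * cos (k₁ - k₂)) k₁ :=
    (((hasDerivAt_sin k₁).const_mul (-2)).sub
      (((hasDerivAt_sin (k₁ - k₂)).comp_sub_const k₁ k₂).const_mul 2)).congr_deriv (by ring)
  have hw : (fun x => deriv (fun y => phiT y k₂) x) =ᶠ[𝓝 k₁]
      fun x => (-2 * sin x - 2 * sin (x - k₂)) / (2 * √(phiTSq x k₂)) :=
    (eventually_pos_phiTSq_fst h).mono fun x hx => (hasDerivAt_phiT_fst hx).deriv
  rw [hw.deriv_eq, sq]
  exact ((hasDerivAt_phiTSq_fst k₁ k₂).div_two_sqrt hv h).deriv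

theorem deriv_deriv_phiT_snd_snd {k₁ k₂ : ℝ} (h : 0 < phiTSq k₁ k₂) :
    deriv (fun y => deriv (fun x => phiT k₁ x) y) k₂ =
      (2 * phiTSq k₁ k₂ * (-2 * cos k₂ - 2 * cos (k₁ - k₂)) -
          (-2 * sin k₂ + 2 * sin (k₁ - k₂)) ^ 2) / (4 * √(phiTSq k₁ k₂) ^ 3) := by
  have hv : HasDerivAt (fun y => -2 * sin y + 2 * sin (k₁ - y))
      (-2 * cos k₂ - 2 * cos (k₁ - k₂)) k₂ :=
    (((hasDerivAt_sin k₂).const_mul (-2)).add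
      (((hasDerivAt_sin (k₁ - k₂)).comp_const_sub k₁ k₂).const_mul 2)).congr_deriv (by ring)
  have hw : (fun y => deriv (fun x => phiT k₁ x) y) =ᶠ[𝓝 k₂]
      fun y => (-2 * sin y + 2 * sin (k₁ - y)) / (2 * √(phiTSq k₁ y)) :=
    (eventually_pos_phiTSq_snd h).mono fun y hy => (hasDerivAt_phiT_snd hy).deriv
  rw [hw.deriv_eq, sq]
  exact ((hasDerivAt_phiTSq_snd k₁ k₂).div_two_sqrt hv h).deriv

theorem deriv_deriv_phiT_fst_snd {k₁ k₂ : ℝ} (h : 0 < phiTSq k₁ k₂) :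
    deriv (fun x => deriv (fun y => phiT x y) k₂) k₁ =
      (2 * phiTSq k₁ k₂ * (2 * cos (k₁ - k₂)) -
          (-2 * sin k₁ - 2 * sin (k₁ - k₂)) * (-2 * sin k₂ + 2 * sin (k₁ - k₂))) /
        (4 * √(phiTSq k₁ k₂) ^ 3) := by
  have hv : HasDerivAt (fun x => -2 * sin k₂ + 2 * sin (x - k₂)) (2 * cos (k₁ - k₂)) k₁ :=
    (((hasDerivAt_sin (k₁ - k₂)).comp_sub_const k₁ k₂).const_mul 2).const_add _
  have hw : (fun x => deriv (fun y => phiT x y) k₂) =ᶠ[𝓝 k₁]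
      fun x => (-2 * sin k₂ + 2 * sin (x - k₂)) / (2 * √(phiTSq x k₂)) :=
    (eventually_pos_phiTSq_fst h).mono fun x hx => (hasDerivAt_phiT_snd hx).deriv
  rw [hw.deriv_eq]
  exact ((hasDerivAt_phiTSq_fst k₁ k₂).div_two_sqrt hv h).deriv

theorem hessian_numerator_phiTSq (k₁ k₂ : ℝ) :
    (2 * phiTSq k₁ k₂ * (-2 * cos k₁ - 2 * cos (k₁ - k₂)) -
          (-2 * sin k₁ - 2 * sin (k₁ - k₂)) ^ 2) *
        (2 * phiTSq k₁ k₂ * (-2 * cos k₂ - 2 * cos (k₁ - k₂)) -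
          (-2 * sin k₂ + 2 * sin (k₁ - k₂)) ^ 2) -
      (2 * phiTSq k₁ k₂ * (2 * cos (k₁ - k₂)) -
          (-2 * sin k₁ - 2 * sin (k₁ - k₂)) * (-2 * sin k₂ + 2 * sin (k₁ - k₂))) ^ 2 =
      16 * phiTSq k₁ k₂ * ((1 + cos k₂ + cos (k₁ - k₂)) * (1 + cos k₁ + cos (k₁ - k₂)) *
        (1 + cos k₁ + cos k₂)) := by
  have r₁₂ : cos (k₁ - k₂) = cos k₁ * cos k₂ + sin k₁ * sin k₂ := cos_sub k₁ k₂
  have r₁ : cos k₁ = cos k₂ * cos (k₁ - k₂) - sin k₂ * sin (k₁ - k₂) := by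
    rw [← cos_add, add_sub_cancel]
  have r₂ : cos k₂ = cos k₁ * cos (k₁ - k₂) + sin k₁ * sin (k₁ - k₂) := by
    rw [← cos_sub, sub_sub_cancel]
  unfold phiTSq
  linear_combination 16 * (3 + 2 * cos k₁ + 2 * cos k₂ + 2 * cos (k₁ - k₂)) *
    ((cos k₂ + cos (k₁ - k₂)) * sin_sq_add_cos_sq k₁ +
      (cos k₁ + cos (k₁ - k₂)) * sin_sq_add_cos_sq k₂ +
      (cos k₁ + cos k₂) * sin_sq_add_cos_sq (k₁ - k₂) -
      2 * cos k₁ * r₁ - 2 * cos k₂ * r₂ - 2 * cos (k₁ - k₂) * r₁₂ +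
      cos_sq_add_cos_sq_add_cos_sub_sq k₁ k₂)

theorem stmt_6 (k₁ k₂ : ℝ) (h : phiT k₁ k₂ ≠ 0) :
    ((deriv (fun x => deriv (fun y => phiT y k₂) x) k₁) *
        (deriv (fun x => deriv (fun y => phiT k₁ y) x) k₂) -
      (deriv (fun x => deriv (fun y => phiT x y) k₂) k₁) ^ 2 = 0) ↔
      (1 + Real.cos k₂ + Real.cos (k₁ - k₂) = 0 ∨ 1 + Real.cos k₁ + Real.cos (k₁ - k₂) = 0 ∨
        1 + Real.cos k₁ + Real.cos k₂ = 0) := by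
  have hG : 0 < phiTSq k₁ k₂ := sqrt_ne_zero'.mp h
  have hs : 0 < √(phiTSq k₁ k₂) := sqrt_pos.mpr hG
  rw [deriv_deriv_phiT_fst_fst hG, deriv_deriv_phiT_snd_snd hG, deriv_deriv_phiT_fst_snd hG,
    div_mul_div_sub_div_sq_eq_zero_iff (by positivity), hessian_numerator_phiTSq]
  simp only [mul_eq_zero, hG.ne', or_assoc, OfNat.ofNat_ne_zero, false_or]
end
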